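/- For each γ ∈ ℝ and each α ∈ ℝ with c = (1-2α)/√2, the function u(x,t) = (1/2)(1 + tanh((x + ct + γ)/(2√2))) satisfies the PDE ∂u/∂t = ∂²u/∂x² + u(1-u)(u-α) for all (x,t) ∈ ℝ². -/

import Mathlib

/-! `u` is the travelling wave `φ (x + c t + γ)` with `φ z = (1 + tanh (z / (2√2))) / 2`, and `φ`
solves the logistic equation `φ' = φ (1 - φ) / √2`. Differentiating once more gives
`φ'' = (1 - 2φ) φ (1 - φ) / 2`, so `u_xx + u (1 - u) (u - α) = (1/2 - α) φ (1 - φ) = c φ' = u_t`. -/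

open Real

theorem Real.hasDerivAt_tanh (x : ℝ) : HasDerivAt tanh (1 - tanh x ^ 2) x := by
  rw [show tanh = sinh / cosh from funext tanh_eq_sinh_div_cosh]
  refine ((hasDerivAt_sinh x).div (hasDerivAt_cosh x) (cosh_pos x).ne').congr_deriv ?_
  rw [Pi.div_apply]
  field_simp

noncomputable def tanhKink (w z : ℝ) : ℝ := 1 / 2 * (1 + tanh (z / w))

theorem hasDerivAt_tanhKink (w z : ℝ) :
    HasDerivAt (tanhKink w) (2 / w * (tanhKink w z * (1 - tanhKink w z))) z := by
  refine ((((hasDerivAt_tanh (z / w)).comp z ((hasDerivAt_id z).div_const w)).const_add 1).const_mul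
    (1 / 2 : ℝ)).congr_deriv ?_
  simp only [tanhKink]
  ring

theorem deriv_deriv_of_logistic {φ : ℝ → ℝ} {a : ℝ}
    (hφ : ∀ z, HasDerivAt φ (a * (φ z * (1 - φ z))) z) (z : ℝ) :
    deriv (deriv φ) z = a ^ 2 * (1 - 2 * φ z) * (φ z * (1 - φ z)) := by
  rw [show deriv φ = fun z => a * (φ z * (1 - φ z)) from funext fun z => (hφ z).deriv]
  exact (((hφ z).mul ((hφ z).const_sub 1)).const_mul a).deriv.trans (by ring)

theorem hasDerivAt_comp_add_mul_add {φ : ℝ → ℝ} {φ' : ℝ} (x c γ t : ℝ)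
    (hφ : HasDerivAt φ φ' (x + c * t + γ)) :
    HasDerivAt (fun s => φ (x + c * s + γ)) (c * φ') t := by
  have h : HasDerivAt (fun s => x + c * s + γ) c t := by
    simpa using ((hasDerivAt_id t).const_mul c).const_add x |>.add_const γ
  exact (hφ.comp t h).congr_deriv (mul_comm _ _)

theorem stmt_2 (α γ c : ℝ) (hc : c = (1 - 2 * α) / Real.sqrt 2)
    (u : ℝ → ℝ → ℝ)
    (hu : ∀ x t : ℝ, u x t = (1/2) * (1 + Real.tanh ((x + c * t + γ) / (2 * Real.sqrt 2)))) :
    ∀ x t : ℝ,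
      deriv (fun s => u x s) t =
        deriv (deriv (fun y => u y t)) x + u x t * (1 - u x t) * (u x t - α) := by
  intro x t
  set φ := tanhKink (2 * √2)
  obtain rfl : u = fun x t => φ (x + c * t + γ) := funext₂ hu
  have hshift : (fun y => φ (y + c * t + γ)) = fun y => φ (y + (c * t + γ)) :=
    funext fun y => by rw [add_assoc]
  have hsqrt : √2 ^ 2 = 2 := sq_sqrt zero_le_two
  have hspeed : 2 / (2 * √2) * c = (1 - 2 * α) / 2 := by
    rw [hc]
    field_simp
    linear_combination (2 * α - 1) * hsqrt
  have hdiffusion : (2 / (2 * √2)) ^ 2 = 1 / 2 := by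
    field_simp
    linear_combination -hsqrt
  rw [(hasDerivAt_comp_add_mul_add x c γ t (hasDerivAt_tanhKink _ _)).deriv, hshift,
    funext fun y => deriv_comp_add_const φ (c * t + γ) y, deriv_comp_add_const,
    deriv_deriv_of_logistic (hasDerivAt_tanhKink _), ← add_assoc, mul_left_comm, ← mul_assoc,
    hspeed, hdiffusion]
  ring
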